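/- arXiv:0706.2840 — 2 statements merged into one kernel-verified Lean document; each statement's English description precedes it below -/
import Mathlib

section
/- With a = 1 and b = 2π/ln 2, both real series ∑_{n=1}^∞ ((-1)^n/n)·cos(b·ln n) and ∑_{n=1}^∞ ((-1)^n/n)·sin(b·ln n) converge and equal 0. -/
/-!
With `z = i b` the series is `∑ (-1)^n n^(z-1)`, and `2^z = 1`. Since `(2n)^(z-1) = n^(z-1) / 2`,
the even terms among the first `2N` add up to half of the first `N` terms of `∑ n^(z-1)`, so the
alternating partial sum up to `2N` equals `-∑_{N < n ≤ 2N} n^(z-1)`. Comparing this block with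
`∫_N^{2N} x^(z-1) dx = (2^z - 1) N^z / z = 0` costs `O(1/N^2)` per term, hence `O(1/N)` in total.
-/

open Filter Topology Finset Set Complex

section EulerSummation

variable {F : Type*} [NormedAddCommGroup F] [NormedSpace ℝ F] {E f f' : ℝ → F} {K : ℝ}

theorem norm_sub_sub_le_of_hasDerivAt {a : ℝ}
    (hE : ∀ x ∈ Icc a (a + 1), HasDerivAt E (f x) x)
    (hf : ∀ x ∈ Icc a (a + 1), HasDerivAt f (f' x) x)
    (hf' : ∀ x ∈ Icc a (a + 1), ‖f' x‖ ≤ K) :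
    ‖E (a + 1) - E a - f (a + 1)‖ ≤ K := by
  have hI : a + 1 ∈ Icc a (a + 1) := right_mem_Icc.2 (by linarith)
  have hf_near : ∀ x ∈ Icc a (a + 1), ‖f x - f (a + 1)‖ ≤ K := fun x hx => by
    have hdist : ‖x - (a + 1)‖ ≤ 1 := by
      rw [Real.norm_eq_abs, abs_le]; constructor <;> linarith [hx.1, hx.2]
    calc ‖f x - f (a + 1)‖ ≤ K * ‖x - (a + 1)‖ :=
          (convex_Icc a (a + 1)).norm_image_sub_le_of_norm_hasDerivWithin_le
            (fun y hy => (hf y hy).hasDerivWithinAt) hf' hI hx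
      _ ≤ K := mul_le_of_le_one_right ((norm_nonneg _).trans (hf' x hx)) hdist
  -- `E x - x • f (a + 1)` has derivative `f x - f (a + 1)`, which is bounded by `K`.
  have hg : ∀ x ∈ Icc a (a + 1), HasDerivWithinAt (fun y => E y - y • f (a + 1))
      (f x - f (a + 1)) (Icc a (a + 1)) x := fun x hx => by
    have := (hE x hx).sub ((hasDerivAt_id' x).smul_const (f (a + 1)))
    rw [one_smul] at this
    exact this.hasDerivWithinAt
  have h := (convex_Icc a (a + 1)).norm_image_sub_le_of_norm_hasDerivWithin_le hg hf_near
    (left_mem_Icc.2 (by linarith)) hI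
  convert h using 2
  · rw [add_smul, one_smul]; abel
  · simp

theorem norm_sum_range_sub_sub_le_of_hasDerivAt {a : ℝ} {n : ℕ}
    (hE : ∀ x ∈ Icc a (a + n), HasDerivAt E (f x) x)
    (hf : ∀ x ∈ Icc a (a + n), HasDerivAt f (f' x) x)
    (hf' : ∀ x ∈ Icc a (a + n), ‖f' x‖ ≤ K) :
    ‖∑ k ∈ range n, f (a + k + 1) - (E (a + n) - E a)‖ ≤ n * K := by
  induction n with
  | zero => simp
  | succ n ih =>
    have hsub : Icc a (a + n) ⊆ Icc a (a + (n + 1 : ℕ)) :=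
      Icc_subset_Icc_right (by push_cast; linarith)
    have hstep : Icc (a + n) (a + n + 1) ⊆ Icc a (a + (n + 1 : ℕ)) :=
      Icc_subset_Icc (by linarith [(n.cast_nonneg : (0 : ℝ) ≤ n)]) (by push_cast; linarith)
    have h₁ := ih (fun x hx => hE x (hsub hx)) (fun x hx => hf x (hsub hx))
      (fun x hx => hf' x (hsub hx))
    have h₂ := norm_sub_sub_le_of_hasDerivAt (fun x hx => hE x (hstep hx))
      (fun x hx => hf x (hstep hx)) (fun x hx => hf' x (hstep hx))
    calc ‖∑ k ∈ range (n + 1), f (a + k + 1) - (E (a + (n + 1 : ℕ)) - E a)‖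
        = ‖(∑ k ∈ range n, f (a + k + 1) - (E (a + n) - E a))
            - (E (a + n + 1) - E (a + n) - f (a + n + 1))‖ := by
          rw [sum_range_succ]; push_cast; congr 1; rw [← add_assoc]; abel
      _ ≤ n * K + K := norm_sub_le_of_le h₁ h₂
      _ = (n + 1 : ℕ) * K := by push_cast; ring

end EulerSummation

theorem tendsto_of_tendsto_two_mul_of_tendsto_two_mul_add_one {α : Type*} {u : ℕ → α}
    {l : Filter α} (h₀ : Tendsto (fun n => u (2 * n)) atTop l)
    (h₁ : Tendsto (fun n => u (2 * n + 1)) atTop l) : Tendsto u atTop l := by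
  intro s hs
  obtain ⟨N₀, hN₀⟩ := eventually_atTop.1 (h₀ hs)
  obtain ⟨N₁, hN₁⟩ := eventually_atTop.1 (h₁ hs)
  refine eventually_atTop.2 ⟨2 * max N₀ N₁, fun m hm => ?_⟩
  obtain ⟨k, rfl | rfl⟩ := Nat.even_or_odd' m
  · exact hN₀ k (by omega)
  · exact hN₁ k (by omega)

theorem sum_range_two_mul_neg_one_pow_mul {R : Type*} [CommRing R] (g : ℕ → R) (N : ℕ) :
    ∑ n ∈ range (2 * N), (-1 : R) ^ (n + 1) * g (n + 1)
      = 2 * ∑ n ∈ range N, g (2 * (n + 1)) - ∑ n ∈ range (2 * N), g (n + 1) := by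
  induction N with
  | zero => simp
  | succ N ih =>
    have hodd : (-1 : R) ^ (2 * N + 1) = -1 := by rw [pow_succ, pow_mul]; simp
    rw [show 2 * (N + 1) = 2 * N + 1 + 1 by ring, sum_range_succ, sum_range_succ, ih,
      sum_range_succ, sum_range_succ, sum_range_succ, hodd, pow_succ, hodd,
      show 2 * N + 1 + 1 = 2 * (N + 1) by ring]
    ring

section

variable {z : ℂ} {x : ℝ}

theorem re_eq_zero_of_two_cpow_eq_one (h : (2 : ℂ) ^ z = 1) : z.re = 0 := by
  have h' := norm_cpow_eq_rpow_re_of_pos two_pos z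
  rw [ofReal_ofNat, h, norm_one, ← Real.rpow_zero 2] at h'
  exact ((Real.rpow_right_inj two_pos (by norm_num)).1 h').symm

theorem norm_ofReal_cpow_sub_natCast (hz : z.re = 0) (hx : 0 < x) (n : ℕ) :
    ‖(x : ℂ) ^ (z - n)‖ = (x ^ n)⁻¹ := by
  rw [norm_cpow_eq_rpow_re_of_pos hx, sub_re, hz, natCast_re, zero_sub,
    Real.rpow_neg hx.le, Real.rpow_natCast]

theorem ofReal_two_mul_cpow (h : (2 : ℂ) ^ z = 1) (hx : 0 ≤ x) :
    ((2 * x : ℝ) : ℂ) ^ z = (x : ℂ) ^ z := by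
  rw [ofReal_mul, mul_cpow_ofReal_nonneg zero_le_two hx, ofReal_ofNat, h, one_mul]

theorem natCast_two_mul_cpow_sub_one (h : (2 : ℂ) ^ z = 1) (n : ℕ) :
    ((2 * n : ℕ) : ℂ) ^ (z - 1) = (n : ℂ) ^ (z - 1) / 2 := by
  rw [Nat.cast_mul, natCast_mul_natCast_cpow, Nat.cast_ofNat, cpow_sub _ _ two_ne_zero, h,
    cpow_one]
  ring

theorem norm_sum_range_natCast_cpow_sub_one_le (hz : z ≠ 0) (h2 : (2 : ℂ) ^ z = 1) {N : ℕ}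
    (hN : 0 < N) : ‖∑ k ∈ range N, ((N + k + 1 : ℕ) : ℂ) ^ (z - 1)‖ ≤ ‖z - 1‖ / N := by
  have hre := re_eq_zero_of_two_cpow_eq_one h2
  have hN' : (0 : ℝ) < N := Nat.cast_pos.2 hN
  have hpos : ∀ x ∈ Icc (N : ℝ) (N + N), 0 < x := fun x hx => hN'.trans_le hx.1
  -- `x ^ z / z` is an antiderivative of `x ^ (z - 1)` that takes the same value at `N` and `2N`.
  have h := norm_sum_range_sub_sub_le_of_hasDerivAt (E := fun x : ℝ => (x : ℂ) ^ z / z)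
    (f' := fun x : ℝ => (z - 1) * (x : ℂ) ^ (z - 1 - 1)) (K := ‖z - 1‖ / (N : ℝ) ^ 2)
    (fun x hx => by
      simpa using hasDerivAt_ofReal_cpow_const' (hpos x hx).ne' (r := z - 1) (by simpa using hz))
    (fun x hx => hasDerivAt_ofReal_cpow_const (hpos x hx).ne' (sub_ne_zero.2 fun h => by
      simp [h] at hre))
    (fun x hx => by
      rw [norm_mul, sub_sub, one_add_one_eq_two, ← Nat.cast_ofNat,
        norm_ofReal_cpow_sub_natCast hre (hpos x hx), ← div_eq_mul_inv]
      gcongr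
      exact hx.1)
  rw [← two_mul, ofReal_two_mul_cpow h2 hN'.le, sub_self, sub_zero] at h
  push_cast at h ⊢
  refine h.trans_eq ?_
  field_simp

theorem tendsto_sum_range_neg_one_pow_mul_cpow_sub_one (hz : z ≠ 0) (h2 : (2 : ℂ) ^ z = 1) :
    Tendsto (fun M => ∑ n ∈ range M, (-1 : ℂ) ^ (n + 1) * ((n + 1 : ℕ) : ℂ) ^ (z - 1))
      atTop (𝓝 0) := by
  set A := fun M => ∑ n ∈ range M, (-1 : ℂ) ^ (n + 1) * ((n + 1 : ℕ) : ℂ) ^ (z - 1)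
  have hre := re_eq_zero_of_two_cpow_eq_one h2
  have heven : ∀ N, A (2 * N) = -∑ k ∈ range N, ((N + k + 1 : ℕ) : ℂ) ^ (z - 1) := fun N => by
    dsimp only [A]
    rw [sum_range_two_mul_neg_one_pow_mul (fun n : ℕ => (n : ℂ) ^ (z - 1))]
    simp only [natCast_two_mul_cpow_sub_one h2, ← sum_div, two_mul N, sum_range_add, add_assoc]
    ring
  have hA_even : Tendsto (fun N => A (2 * N)) atTop (𝓝 0) := by
    refine squeeze_zero_norm' ?_ (tendsto_const_div_atTop_nhds_zero_nat ‖z - 1‖)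
    filter_upwards [eventually_gt_atTop 0] with N hN
    rw [heven, norm_neg]
    exact norm_sum_range_natCast_cpow_sub_one_le hz h2 hN
  refine tendsto_of_tendsto_two_mul_of_tendsto_two_mul_add_one hA_even ?_
  have hlast : Tendsto (fun N : ℕ => (-1 : ℂ) ^ (2 * N + 1) * ((2 * N + 1 : ℕ) : ℂ) ^ (z - 1))
      atTop (𝓝 0) := by
    refine squeeze_zero_norm (fun N => ?_) tendsto_one_div_add_atTop_nhds_zero_nat
    have h := norm_ofReal_cpow_sub_natCast hre (x := (2 * N + 1 : ℕ)) (by positivity) 1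
    push_cast at h ⊢
    rw [norm_mul, norm_pow, norm_neg, norm_one, one_pow, one_mul, h, pow_one, one_div]
    gcongr
    linarith
  simpa [A, sum_range_succ] using hA_even.add hlast

end

theorem ofReal_cpow_ofReal_mul_I {x : ℝ} (hx : 0 < x) (b : ℝ) :
    (x : ℂ) ^ ((b : ℂ) * I) = exp ((b * Real.log x : ℝ) * I) := by
  rw [cpow_def_of_ne_zero (ofReal_ne_zero.2 hx.ne'), ← ofReal_log hx.le]
  push_cast
  ring_nf

theorem ofReal_cpow_ofReal_mul_I_sub_one {x : ℝ} (hx : 0 < x) (b : ℝ) :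
    (x : ℂ) ^ ((b : ℂ) * I - 1) = (x⁻¹ : ℝ) * exp ((b * Real.log x : ℝ) * I) := by
  rw [cpow_sub _ _ (ofReal_ne_zero.2 hx.ne'), cpow_one, ofReal_cpow_ofReal_mul_I hx, ofReal_inv,
    div_eq_inv_mul]

theorem counterexample_series_vanish :
    Tendsto (fun N : ℕ => ∑ n ∈ Finset.range N,
        ((-1 : ℝ) ^ (n + 1) / ((n : ℝ) + 1)) *
          Real.cos ((2 * Real.pi / Real.log 2) * Real.log ((n : ℝ) + 1)))
      atTop (𝓝 0) ∧
    Tendsto (fun N : ℕ => ∑ n ∈ Finset.range N,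
        ((-1 : ℝ) ^ (n + 1) / ((n : ℝ) + 1)) *
          Real.sin ((2 * Real.pi / Real.log 2) * Real.log ((n : ℝ) + 1)))
      atTop (𝓝 0) := by
  set b := 2 * Real.pi / Real.log 2
  have hb : b * Real.log 2 = 2 * Real.pi := div_mul_cancel₀ _ (Real.log_pos one_lt_two).ne'
  have hz : (b : ℂ) * I ≠ 0 := mul_ne_zero (ofReal_ne_zero.2 (by positivity)) I_ne_zero
  have h2 : (2 : ℂ) ^ ((b : ℂ) * I) = 1 := by
    rw [← ofReal_ofNat, ofReal_cpow_ofReal_mul_I two_pos, hb, ofReal_mul, ofReal_ofNat,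
      exp_two_pi_mul_I]
  have hterm : ∀ n : ℕ, (-1 : ℂ) ^ (n + 1) * ((n + 1 : ℕ) : ℂ) ^ ((b : ℂ) * I - 1)
      = ((-1 : ℝ) ^ (n + 1) / ((n : ℝ) + 1) : ℝ) * exp ((b * Real.log ((n : ℝ) + 1) : ℝ) * I) :=
    fun n => by
      rw [← ofReal_natCast, ofReal_cpow_ofReal_mul_I_sub_one (by positivity)]
      push_cast
      ring
  have h := tendsto_sum_range_neg_one_pow_mul_cpow_sub_one hz h2
  simp only [hterm] at h
  constructor
  · simpa only [Function.comp_def, re_sum, re_ofReal_mul, exp_ofReal_mul_I_re, zero_re]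
      using (continuous_re.tendsto 0).comp h
  · simpa only [Function.comp_def, im_sum, im_ofReal_mul, exp_ofReal_mul_I_im, zero_im]
      using (continuous_im.tendsto 0).comp h
end

section
/- The Riemann Hypothesis holds if and only if the following statement holds: for all real numbers a and b, if ∑_{n=1}^∞ ((-1)^n/n^a)·cos(b·ln n) = 0 and ∑_{n=1}^∞ ((-1)^n/n^a)·sin(b·ln n) = 0, then a = 1/2 or a = 1. -/
/-!
For `0 < Re s` the alternating series `∑ (-1)^m m^(-s)` converges: grouping consecutive terms
gives a series with terms `O(|s| k^(-Re s - 1))`, hence a holomorphic sum on the half-plane. It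
agrees with the entire `L`-function of the sign character mod 2 for `Re s > 1`, and that
`L`-function equals `(2^(1-s) - 1) ζ(s)` off `s = 1` (both sides agree for `Re s > 1`).
At `s = a + bi` the cosine and sine series are the real part and minus the imaginary part of
this series. Their vanishing forces `a > 0` (the terms have modulus `m^(-a)`) and then
`ζ(s) = 0` or `|2^(1-s)| = 1`, i.e. `a = 1`. Conversely a nontrivial zero has `0 < Re s < 1`:
`ζ` has no zeros on `Re s ≥ 1`, and by the functional equation those on `Re s ≤ 0` are
trivial.
-/

open Filter Topology Complex Finset

lemma norm_ofReal_cpow_neg_sub_le {s : ℂ} (hs : -1 ≤ s.re) {x y : ℝ} (hx : 0 < x)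
    (hxy : x ≤ y) :
    ‖(y : ℂ) ^ (-s) - (x : ℂ) ^ (-s)‖ ≤ ‖s‖ * x ^ (-s.re - 1) * (y - x) := by
  have hderiv : ∀ t ∈ Set.Icc x y, HasDerivWithinAt (fun u : ℝ => (u : ℂ) ^ (-s))
      (-s * (t : ℂ) ^ (-s - 1)) (Set.Icc x y) t := fun t ht => by
    have := ((hasDerivAt_id (t : ℂ)).cpow_const (c := -s)
      (ofReal_mem_slitPlane.2 (hx.trans_le ht.1))).comp_ofReal
    simpa using this.hasDerivWithinAt
  have hbound : ∀ t ∈ Set.Icc x y,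
      ‖-s * (t : ℂ) ^ (-s - 1)‖ ≤ ‖s‖ * x ^ (-s.re - 1) := fun t ht => by
    rw [norm_mul, norm_neg, norm_cpow_eq_rpow_re_of_pos (hx.trans_le ht.1)]
    simp only [sub_re, neg_re, one_re]
    exact mul_le_mul_of_nonneg_left (Real.rpow_le_rpow_of_nonpos hx ht.1 (by linarith))
      (norm_nonneg s)
  simpa [Real.norm_of_nonneg (sub_nonneg.2 hxy)] using
    (convex_Icc x y).norm_image_sub_le_of_norm_hasDerivWithin_le hderiv hbound
      (Set.left_mem_Icc.2 hxy) (Set.right_mem_Icc.2 hxy)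

noncomputable def etaPair (s : ℂ) (k : ℕ) : ℂ :=
  1 / ((2 * k + 2 : ℕ) : ℂ) ^ s - 1 / ((2 * k + 1 : ℕ) : ℂ) ^ s

lemma norm_etaPair_le {s : ℂ} (hs : -1 ≤ s.re) (k : ℕ) :
    ‖etaPair s k‖ ≤ ‖s‖ * (2 * k + 1 : ℝ) ^ (-s.re - 1) := by
  have h := norm_ofReal_cpow_neg_sub_le hs (x := 2 * k + 1) (y := 2 * k + 2) (by positivity)
    (by linarith)
  simp only [add_sub_add_left_eq_sub, show (2 : ℝ) - 1 = 1 by norm_num, mul_one] at h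
  simpa [etaPair, ← cpow_neg] using h

lemma summable_two_mul_add_one_rpow {p : ℝ} (hp : p < -1) :
    Summable fun k : ℕ => (2 * k + 1 : ℝ) ^ p := by
  refine .of_nonneg_of_le (fun k => by positivity) (fun k => ?_)
    ((summable_nat_add_iff 1).2 (Real.summable_nat_rpow.2 hp))
  exact Real.rpow_le_rpow_of_nonpos (by positivity)
    (by push_cast; linarith [k.cast_nonneg (α := ℝ)]) (by linarith)

noncomputable def etaPairSum (s : ℂ) : ℂ := ∑' k, etaPair s k

lemma tendstoLocallyUniformlyOn_etaPair :
    TendstoLocallyUniformlyOn (fun N s => ∑ k ∈ range N, etaPair s k) etaPairSum atTop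
      {s | 0 < s.re} := by
  have hopen : IsOpen {s : ℂ | 0 < s.re} := isOpen_lt continuous_const continuous_re
  rw [tendstoLocallyUniformlyOn_iff_forall_isCompact hopen]
  intro K hK hKc
  rcases K.eq_empty_or_nonempty with rfl | hne
  · exact tendstoUniformlyOn_empty
  obtain ⟨z₀, hz₀K, hz₀⟩ := hKc.exists_isMinOn hne continuous_re.continuousOn
  obtain ⟨z₁, -, hz₁⟩ := hKc.exists_isMaxOn hne continuous_norm.continuousOn
  have hσ : 0 < z₀.re := hK hz₀K
  refine tendstoUniformlyOn_tsum_nat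
    ((summable_two_mul_add_one_rpow (p := -z₀.re - 1) (by linarith)).mul_left ‖z₁‖)
    fun k s hs => ?_
  have hs₀ : z₀.re ≤ s.re := hz₀ hs
  have hs₁ : ‖s‖ ≤ ‖z₁‖ := hz₁ hs
  refine (norm_etaPair_le (by linarith) k).trans
    (mul_le_mul hs₁ ?_ (by positivity) (by positivity))
  exact Real.rpow_le_rpow_of_exponent_le (by linarith [k.cast_nonneg (α := ℝ)]) (by linarith)

lemma differentiableOn_etaPairSum : DifferentiableOn ℂ etaPairSum {s | 0 < s.re} := by
  refine tendstoLocallyUniformlyOn_etaPair.differentiableOn (.of_forall fun N => ?_)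
    (isOpen_lt continuous_const continuous_re)
  refine DifferentiableOn.fun_sum fun k _ => ?_
  simp only [etaPair, one_div, ← cpow_neg]
  fun_prop (disch := exact Or.inl (by norm_cast))

/-- `∑_{m=1}^N (-1)^m m^(-s)`: minus the partial sums of the Dirichlet eta function. -/
noncomputable def etaPartialSum (s : ℂ) (N : ℕ) : ℂ :=
  ∑ n ∈ range N, (-1) ^ (n + 1) / ((n : ℂ) + 1) ^ s

lemma norm_etaPartialSum_term (s : ℂ) (n : ℕ) :
    ‖(-1) ^ (n + 1) / ((n : ℂ) + 1) ^ s‖ = ((n : ℝ) + 1) ^ (-s.re) := by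
  rw [show (n : ℂ) + 1 = ((n + 1 : ℝ) : ℂ) by push_cast; rfl, norm_div, norm_pow, norm_neg,
    norm_one, one_pow, norm_cpow_eq_rpow_re_of_pos (by positivity), Real.rpow_neg (by positivity),
    one_div]

lemma etaPartialSum_two_mul (s : ℂ) (M : ℕ) :
    etaPartialSum s (2 * M) = ∑ k ∈ range M, etaPair s k := by
  induction M with
  | zero => simp [etaPartialSum]
  | succ M ih =>
    have hodd : (-1 : ℂ) ^ (2 * M + 1) = -1 := Odd.neg_one_pow ⟨M, rfl⟩
    have heven : (-1 : ℂ) ^ (2 * M + 1 + 1) = 1 := Even.neg_one_pow ⟨M + 1, by ring⟩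
    rw [sum_range_succ, ← ih, show 2 * (M + 1) = 2 * M + 1 + 1 by ring, etaPartialSum,
      sum_range_succ, sum_range_succ, ← etaPartialSum, etaPair, hodd, heven]
    push_cast
    ring_nf

lemma tendsto_of_tendsto_even_of_tendsto_odd {α : Type*} [TopologicalSpace α] {u : ℕ → α}
    {a : α} (he : Tendsto (fun k => u (2 * k)) atTop (𝓝 a))
    (ho : Tendsto (fun k => u (2 * k + 1)) atTop (𝓝 a)) : Tendsto u atTop (𝓝 a) := by
  rw [tendsto_atTop'] at *
  intro t ht
  obtain ⟨N₁, h₁⟩ := he t ht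
  obtain ⟨N₂, h₂⟩ := ho t ht
  refine ⟨2 * (N₁ + N₂), fun n hn => ?_⟩
  rcases Nat.even_or_odd' n with ⟨k, rfl | rfl⟩
  · exact h₁ k (by omega)
  · exact h₂ k (by omega)

lemma tendsto_etaPartialSum_etaPairSum {s : ℂ} (hs : 0 < s.re) :
    Tendsto (etaPartialSum s) atTop (𝓝 (etaPairSum s)) := by
  have hsum : Summable (etaPair s) :=
    .of_norm_bounded
      ((summable_two_mul_add_one_rpow (p := -s.re - 1) (by linarith)).mul_left ‖s‖)
      (norm_etaPair_le (by linarith))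
  have heven : Tendsto (fun M => etaPartialSum s (2 * M)) atTop (𝓝 (etaPairSum s)) := by
    simpa only [etaPartialSum_two_mul, etaPairSum] using hsum.hasSum.tendsto_sum_nat
  have hterm : Tendsto (fun n : ℕ => (-1) ^ (n + 1) / ((n : ℂ) + 1) ^ s) atTop (𝓝 0) := by
    rw [tendsto_zero_iff_norm_tendsto_zero]
    simp only [norm_etaPartialSum_term]
    exact (tendsto_rpow_neg_atTop hs).comp
      (tendsto_atTop_add_const_right _ 1 tendsto_natCast_atTop_atTop)
  refine tendsto_of_tendsto_even_of_tendsto_odd heven ?_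
  simpa [etaPartialSum, sum_range_succ] using
    heven.add (hterm.comp (tendsto_id.const_mul_atTop' two_pos))

noncomputable def altSign (j : ZMod 2) : ℂ := (-1) ^ j.val

lemma altSign_natCast (n : ℕ) : altSign n = (-1) ^ n := by
  rw [altSign, ZMod.val_natCast, ← neg_one_pow_eq_pow_mod_two]

lemma sum_altSign : ∑ j, altSign j = 0 := by
  show ∑ j : Fin 2, (-1 : ℂ) ^ j.val = 0
  simp [Fin.sum_univ_two]

lemma tendsto_etaPartialSum_LFunction {s : ℂ} (hs : 1 < s.re) :
    Tendsto (etaPartialSum s) atTop (𝓝 (ZMod.LFunction altSign s)) := by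
  rw [ZMod.LFunction_eq_LSeries altSign hs]
  refine ((ZMod.LSeriesSummable_of_one_lt_re altSign hs).hasSum.tendsto_sum_nat.comp
    (tendsto_add_atTop_nat 1)).congr fun N => ?_
  simp [sum_range_succ', LSeries.term_of_ne_zero, altSign_natCast, etaPartialSum]

lemma etaPairSum_eq_of_one_lt_re {s : ℂ} (hs : 1 < s.re) :
    etaPairSum s = (2 ^ (1 - s) - 1) * riemannZeta s := by
  set f : ℕ → ℂ := fun n => 1 / ((n : ℂ) + 1) ^ s
  have hf : Summable f := by
    simpa [f] using (summable_nat_add_iff 1).2 (Complex.summable_one_div_nat_cpow.2 hs)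
  have heven : Summable fun k => f (2 * k) :=
    hf.comp_injective (mul_right_injective₀ (two_ne_zero' ℕ))
  have hodd : Summable fun k => f (2 * k + 1) :=
    hf.comp_injective ((add_left_injective 1).comp (mul_right_injective₀ (two_ne_zero' ℕ)))
  have hζ : riemannZeta s = ∑' n, f n := zeta_eq_tsum_one_div_nat_add_one_cpow hs
  have hζ_odd : ∑' k, f (2 * k + 1) = 2 ^ (-s) * riemannZeta s := by
    rw [hζ, ← tsum_mul_left]
    refine tsum_congr fun k => ?_
    have h := natCast_mul_natCast_cpow 2 (k + 1) s
    push_cast at h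
    simp only [f, Nat.cast_add, Nat.cast_mul, Nat.cast_ofNat, Nat.cast_one, cpow_neg,
      show (2 * k + 1 + 1 : ℂ) = 2 * (k + 1) by ring, h]
    field_simp
  have hpair : etaPairSum s = ∑' k, f (2 * k + 1) - ∑' k, f (2 * k) := by
    rw [etaPairSum, ← hodd.tsum_sub heven]
    refine tsum_congr fun k => ?_
    simp only [etaPair, f]
    push_cast
    ring_nf
  have hsplit := tsum_even_add_odd heven hodd
  rw [← hζ, hζ_odd] at hsplit
  rw [hpair, hζ_odd, sub_eq_add_neg (1 : ℂ), cpow_add _ _ two_ne_zero, cpow_one]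
  linear_combination -hsplit

lemma eqOn_of_forall_one_lt_re {f g : ℂ → ℂ} {U : Set ℂ} (hU : IsOpen U)
    (hUc : IsPreconnected U) (h2 : (2 : ℂ) ∈ U) (hf : DifferentiableOn ℂ f U)
    (hg : DifferentiableOn ℂ g U)
    (hfg : ∀ s : ℂ, 1 < s.re → f s = g s) : Set.EqOn f g U :=
  (hf.analyticOnNhd hU).eqOn_of_preconnected_of_eventuallyEq (hg.analyticOnNhd hU) hUc h2
    (eventually_of_mem ((isOpen_lt continuous_const continuous_re).mem_nhds (by norm_num)) hfg)

lemma etaPairSum_eq_LFunction {s : ℂ} (hs : 0 < s.re) :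
    etaPairSum s = ZMod.LFunction altSign s :=
  eqOn_of_forall_one_lt_re (isOpen_lt continuous_const continuous_re)
    (convex_halfSpace_re_gt 0).isPreconnected (by norm_num) differentiableOn_etaPairSum
    (ZMod.differentiable_LFunction_of_sum_zero sum_altSign).differentiableOn
    (fun s hs => tendsto_nhds_unique (tendsto_etaPartialSum_etaPairSum (by linarith))
      (tendsto_etaPartialSum_LFunction hs)) hs

lemma LFunction_altSign_eq_mul_riemannZeta {s : ℂ} (hs : s ≠ 1) :
    ZMod.LFunction altSign s = (2 ^ (1 - s) - 1) * riemannZeta s := by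
  refine eqOn_of_forall_one_lt_re (g := fun z => (2 ^ (1 - z) - 1) * riemannZeta z)
    isOpen_compl_singleton
    (isConnected_compl_singleton_of_one_lt_rank (by simp) 1).isPreconnected (by norm_num)
    (ZMod.differentiable_LFunction_of_sum_zero sum_altSign).differentiableOn
    (fun z hz => ?_) (fun z hz => ?_) hs
  · refine DifferentiableAt.differentiableWithinAt ?_
    exact (((differentiableAt_const _).sub differentiableAt_id).const_cpow
      (.inl two_ne_zero)).sub_const 1 |>.mul (differentiableAt_riemannZeta hz)
  · rw [← etaPairSum_eq_LFunction (by linarith), etaPairSum_eq_of_one_lt_re hz]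

theorem tendsto_etaPartialSum {s : ℂ} (hs : 0 < s.re) (hs1 : s ≠ 1) :
    Tendsto (etaPartialSum s) atTop (𝓝 ((2 ^ (1 - s) - 1) * riemannZeta s)) := by
  rw [← LFunction_altSign_eq_mul_riemannZeta hs1, ← etaPairSum_eq_LFunction hs]
  exact tendsto_etaPartialSum_etaPairSum hs

lemma exists_eq_neg_two_mul_of_riemannZeta_eq_zero {s : ℂ} (hζ : riemannZeta s = 0)
    (hs : s.re ≤ 0) : ∃ n : ℕ, s = -2 * ((n : ℂ) + 1) := by
  have hs0 : s ≠ 0 := by rintro rfl; norm_num [riemannZeta_zero] at hζ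
  have h1s : 1 - s ≠ 0 := fun h => by
    have := congrArg re h
    simp only [sub_re, one_re, zero_re] at this
    linarith
  have hΛ : completedRiemannZeta s ≠ 0 := by
    rw [← completedRiemannZeta_one_sub]
    intro h
    refine riemannZeta_ne_zero_of_one_le_re (s := 1 - s)
      (by simp only [sub_re, one_re]; linarith) ?_
    rw [riemannZeta_def_of_ne_zero h1s, h, zero_div]
  -- `ζ = Λ / Γℝ` and `x / 0 = 0`: as `Λ s ≠ 0`, the zero comes from a pole of `Γ(s / 2)`.
  rw [riemannZeta_def_of_ne_zero hs0, div_eq_zero_iff] at hζ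
  obtain ⟨n, hn⟩ := Gammaℝ_eq_zero_iff.1 (hζ.resolve_left hΛ)
  obtain ⟨m, rfl⟩ := Nat.exists_eq_succ_of_ne_zero (n := n) fun h0 =>
    hs0 (by simpa [h0] using hn)
  exact ⟨m, by rw [hn]; push_cast; ring⟩

lemma re_pos_of_tendsto_etaPartialSum {s L : ℂ} (h : Tendsto (etaPartialSum s) atTop (𝓝 L)) :
    0 < s.re := by
  by_contra! hs
  have hterm : Tendsto (fun n : ℕ => (-1) ^ (n + 1) / ((n : ℂ) + 1) ^ s) atTop (𝓝 0) := by
    simpa [etaPartialSum, sum_range_succ] using (h.comp (tendsto_add_atTop_nat 1)).sub h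
  have hnorm := hterm.norm
  simp only [norm_etaPartialSum_term, norm_zero] at hnorm
  have := ge_of_tendsto' hnorm fun n =>
    Real.one_le_rpow (by linarith [n.cast_nonneg (α := ℝ)]) (by linarith)
  norm_num at this

lemma re_eq_one_or_riemannZeta_eq_zero {s : ℂ} (h : Tendsto (etaPartialSum s) atTop (𝓝 0)) :
    s.re = 1 ∨ riemannZeta s = 0 := by
  have hs := re_pos_of_tendsto_etaPartialSum h
  rcases eq_or_ne s 1 with rfl | hs1
  · simp
  rcases mul_eq_zero.1 (tendsto_nhds_unique (tendsto_etaPartialSum hs hs1) h) with h2 | hζ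
  · have hnorm := congrArg norm (sub_eq_zero.1 h2)
    rw [norm_one, show (2 : ℂ) = (2 : ℝ) by norm_num, norm_cpow_eq_rpow_re_of_pos two_pos,
      ← Real.rpow_zero 2, Real.rpow_right_inj two_pos (by norm_num)] at hnorm
    simp only [sub_re, one_re] at hnorm
    exact .inl (by linarith)
  · exact .inr hζ

lemma one_div_ofReal_cpow_add_mul_I {x : ℝ} (hx : 0 < x) (a b : ℝ) :
    1 / (x : ℂ) ^ ((a : ℂ) + b * I) =
      ((1 / x ^ a * Real.cos (b * Real.log x) : ℝ) : ℂ)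
        - ((1 / x ^ a * Real.sin (b * Real.log x) : ℝ) : ℂ) * I := by
  rw [cpow_def_of_ne_zero (ofReal_ne_zero.2 hx.ne'), ← ofReal_log hx.le, one_div, ← exp_neg,
    show -((Real.log x : ℂ) * (a + b * I)) = ((-(a * Real.log x) : ℝ) : ℂ)
      + ((-(b * Real.log x) : ℝ) : ℂ) * I by push_cast; ring,
    exp_add_mul_I, ← ofReal_exp, ← ofReal_cos, ← ofReal_sin, Real.cos_neg, Real.sin_neg,
    Real.exp_neg, Real.rpow_def_of_pos hx, mul_comm a]
  push_cast
  ring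

lemma etaPartialSum_ofReal_add_mul_I (a b : ℝ) (N : ℕ) :
    etaPartialSum (a + b * I) N =
      ((∑ n ∈ range N, ((-1 : ℝ) ^ (n + 1) / ((n : ℝ) + 1) ^ a) *
          Real.cos (b * Real.log ((n : ℝ) + 1)) : ℝ) : ℂ)
        - ((∑ n ∈ range N, ((-1 : ℝ) ^ (n + 1) / ((n : ℝ) + 1) ^ a) *
          Real.sin (b * Real.log ((n : ℝ) + 1)) : ℝ) : ℂ) * I := by
  rw [etaPartialSum, ofReal_sum, ofReal_sum, sum_mul, ← sum_sub_distrib]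
  refine sum_congr rfl fun n _ => ?_
  have h := one_div_ofReal_cpow_add_mul_I (x := n + 1) (by positivity) a b
  push_cast at h ⊢
  rw [div_eq_mul_one_div, h]
  ring

lemma tendsto_etaPartialSum_ofReal_add_mul_I_iff (a b : ℝ) :
    Tendsto (etaPartialSum (a + b * I)) atTop (𝓝 0) ↔
      Tendsto (fun N : ℕ => ∑ n ∈ range N,
          ((-1 : ℝ) ^ (n + 1) / ((n : ℝ) + 1) ^ a) * Real.cos (b * Real.log ((n : ℝ) + 1)))
        atTop (𝓝 0) ∧
      Tendsto (fun N : ℕ => ∑ n ∈ range N,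
          ((-1 : ℝ) ^ (n + 1) / ((n : ℝ) + 1) ^ a) * Real.sin (b * Real.log ((n : ℝ) + 1)))
        atTop (𝓝 0) := by
  simp only [funext (etaPartialSum_ofReal_add_mul_I a b)]
  constructor
  · intro h
    constructor
    · simpa only [Function.comp_def, sub_re, mul_re, ofReal_re, ofReal_im, I_re, I_im, mul_zero,
        zero_mul, sub_zero, zero_re] using (continuous_re.tendsto 0).comp h
    · simpa only [Function.comp_def, sub_im, mul_im, ofReal_re, ofReal_im, I_re, I_im, mul_zero,
        mul_one, add_zero, zero_sub, neg_neg, zero_im, neg_zero] using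
        ((continuous_im.tendsto 0).comp h).neg
  · rintro ⟨hC, hS⟩
    simpa using ((continuous_ofReal.tendsto 0).comp hC).sub
      (((continuous_ofReal.tendsto 0).comp hS).mul_const I)

theorem rh_iff_new_conjecture :
    (∀ s : ℂ, riemannZeta s = 0 → (∀ n : ℕ, s ≠ -2 * ((n : ℂ) + 1)) → s.re = 1 / 2)
      ↔ (∀ a b : ℝ,
          Tendsto (fun N : ℕ => ∑ n ∈ Finset.range N,
              ((-1 : ℝ) ^ (n + 1) / ((n : ℝ) + 1) ^ a) * Real.cos (b * Real.log ((n : ℝ) + 1)))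
            atTop (𝓝 0) →
          Tendsto (fun N : ℕ => ∑ n ∈ Finset.range N,
              ((-1 : ℝ) ^ (n + 1) / ((n : ℝ) + 1) ^ a) * Real.sin (b * Real.log ((n : ℝ) + 1)))
            atTop (𝓝 0) →
          a = 1 / 2 ∨ a = 1) := by
  constructor
  · intro hRH a b hC hS
    have h := (tendsto_etaPartialSum_ofReal_add_mul_I_iff a b).2 ⟨hC, hS⟩
    have ha := re_pos_of_tendsto_etaPartialSum h
    rcases re_eq_one_or_riemannZeta_eq_zero h with h1 | hζ
    · exact .inr (by simpa using h1)
    · have hre := hRH _ hζ fun n hn => by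
        have hre_n : (-2 * ((n : ℂ) + 1)).re = -2 * ((n : ℝ) + 1) := by simp
        rw [hn, hre_n] at ha
        linarith [n.cast_nonneg (α := ℝ)]
      exact .inl (by simpa using hre)
  · intro hconj s hζ htriv
    rcases le_or_gt s.re 0 with hs | hs
    · obtain ⟨n, rfl⟩ := exists_eq_neg_two_mul_of_riemannZeta_eq_zero hζ hs
      exact absurd rfl (htriv n)
    have hs1 : s.re < 1 := lt_of_not_ge fun h => riemannZeta_ne_zero_of_one_le_re h hζ
    have h := tendsto_etaPartialSum hs (by rintro rfl; simp at hs1)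
    rw [hζ, mul_zero, ← re_add_im s] at h
    obtain ⟨hC, hS⟩ := (tendsto_etaPartialSum_ofReal_add_mul_I_iff s.re s.im).1 h
    exact (hconj s.re s.im hC hS).resolve_right hs1.ne
end
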